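/- Let N ≥ 2 be a natural number and let s be a real number with 1/2 ≤ s < 1. Then there exists a constant C > 0 (depending on N and s) such that for every radial continuously differentiable function u : ℝ^N → ℂ whose L² norm and whose gradient's L² norm are finite, one has for every x ∈ ℝ^N: |x|^{(N−2s)/2} · |u(x)| ≤ C · ‖u‖_{L²}^{1−s} · ‖∇u‖_{L²}^{s}. -/

import Mathlib

/-!
Write `u x = g ‖x‖`. In polar coordinates the hypotheses become `∫ t^(N-1) |g|² ≤ m²` and
`∫ t^(N-1) |g'|² ≤ d²`, where `m`, `d` are the two `L²` norms divided by `√(N |B₁|)`.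
Integrating `(|g|²)'` from `r` to a far point where `|g|` is small and applying Cauchy–Schwarz
with weight `t^(N-1)` gives Strauss' bound `r^(N-1) |g r|² ≤ 2 m d`; since `s ≥ 1/2`, for `r ≥ ρ`
it yields `r^((N-2s)/2) |g r| ≤ √2 (ρ^(1-2s) m d)^(1/2)`. For `r ≤ ρ`, write
`g r = g ρ - ∫_r^ρ g'` and apply Cauchy–Schwarz against `t^(1-N)`, using
`∫_r^ρ t^(1-N) ≤ r^(2s-N) ρ^(2-2s) / (2-2s)` (here `s < 1`). The choice `ρ = m / d` turns both
bounds into multiples of `m^(1-s) d^s`.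
-/

open MeasureTheory Set

theorem norm_le_norm_add_setIntegral_norm_deriv {E : Type*} [NormedAddCommGroup E]
    [NormedSpace ℝ E] [CompleteSpace E] {f : ℝ → E} (hf : ContDiff ℝ 1 f) {a b : ℝ}
    (hab : a ≤ b) : ‖f a‖ ≤ ‖f b‖ + ∫ t in Ioc a b, ‖deriv f t‖ := by
  have hftc : ∫ t in a..b, deriv f t = f b - f a :=
    intervalIntegral.integral_deriv_eq_sub (fun t _ => hf.differentiable one_ne_zero t)
      ((hf.continuous_deriv le_rfl).intervalIntegrable a b)
  calc ‖f a‖ ≤ ‖f b‖ + ‖f b - f a‖ := by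
        simpa only [norm_sub_rev] using norm_le_insert' (f a) (f b)
    _ ≤ ‖f b‖ + ∫ t in a..b, ‖deriv f t‖ := by
        rw [← hftc]; gcongr; exact intervalIntegral.norm_integral_le_integral_norm hab
    _ = _ := by rw [intervalIntegral.integral_of_le hab]

theorem ContinuousOn.memLp_restrict_Ioc {f : ℝ → ℝ} {a b : ℝ} (hf : ContinuousOn f (Icc a b))
    (p : ENNReal) : MemLp f p (volume.restrict (Ioc a b)) := by
  have : IsFiniteMeasure (volume.restrict (Ioc a b)) :=
    isFiniteMeasure_restrict.2 measure_Ioc_lt_top.ne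
  obtain ⟨C, hC⟩ := isCompact_Icc.exists_bound_of_continuousOn hf
  exact .of_bound ((hf.mono Ioc_subset_Icc_self).aestronglyMeasurable measurableSet_Ioc) C
    ((ae_restrict_mem measurableSet_Ioc).mono fun t ht => hC t (Ioc_subset_Icc_self ht))

theorem setIntegral_mul_le_sqrt_mul_sqrt {f g : ℝ → ℝ} {a b : ℝ}
    (hf : ContinuousOn f (Icc a b)) (hg : ContinuousOn g (Icc a b))
    (hf0 : ∀ t ∈ Ioc a b, 0 ≤ f t) (hg0 : ∀ t ∈ Ioc a b, 0 ≤ g t) :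
    ∫ t in Ioc a b, f t * g t ≤
      √(∫ t in Ioc a b, f t ^ 2) * √(∫ t in Ioc a b, g t ^ 2) := by
  have hae : ∀ {f : ℝ → ℝ}, (∀ t ∈ Ioc a b, 0 ≤ f t) → 0 ≤ᵐ[volume.restrict (Ioc a b)] f :=
    fun h => (ae_restrict_mem measurableSet_Ioc).mono h
  have := integral_mul_le_Lp_mul_Lq_of_nonneg Real.HolderConjugate.two_two (hae hf0) (hae hg0)
    (hf.memLp_restrict_Ioc _) (hg.memLp_restrict_Ioc _)
  simpa only [Real.sqrt_eq_rpow, Real.rpow_two] using this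

theorem setIntegral_mul_mul_le_sqrt_mul_sqrt {w f g : ℝ → ℝ} {a b : ℝ}
    (hw : ContinuousOn w (Icc a b)) (hf : ContinuousOn f (Icc a b))
    (hg : ContinuousOn g (Icc a b)) (hw0 : ∀ t ∈ Ioc a b, 0 ≤ w t)
    (hf0 : ∀ t ∈ Ioc a b, 0 ≤ f t) (hg0 : ∀ t ∈ Ioc a b, 0 ≤ g t) :
    ∫ t in Ioc a b, w t * (f t * g t) ≤
      √(∫ t in Ioc a b, w t * f t ^ 2) * √(∫ t in Ioc a b, w t * g t ^ 2) := by
  have hsw : ContinuousOn (fun t => √(w t)) (Icc a b) := Real.continuous_sqrt.comp_continuousOn hw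
  have hsq : ∀ h : ℝ → ℝ, ∫ t in Ioc a b, (√(w t) * h t) ^ 2 = ∫ t in Ioc a b, w t * h t ^ 2 :=
    fun h => setIntegral_congr_fun measurableSet_Ioc fun t ht => by
      rw [mul_pow, Real.sq_sqrt (hw0 t ht)]
  calc ∫ t in Ioc a b, w t * (f t * g t)
      = ∫ t in Ioc a b, (√(w t) * f t) * (√(w t) * g t) :=
        setIntegral_congr_fun measurableSet_Ioc fun t ht => by
          rw [mul_mul_mul_comm, Real.mul_self_sqrt (hw0 t ht)]
    _ ≤ √(∫ t in Ioc a b, (√(w t) * f t) ^ 2) * √(∫ t in Ioc a b, (√(w t) * g t) ^ 2) :=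
        setIntegral_mul_le_sqrt_mul_sqrt (hsw.mul hf) (hsw.mul hg)
          (fun t ht => mul_nonneg (Real.sqrt_nonneg _) (hf0 t ht))
          (fun t ht => mul_nonneg (Real.sqrt_nonneg _) (hg0 t ht))
    _ = _ := by rw [hsq, hsq]

theorem exists_le_of_setIntegral_pow_mul_le {n : ℕ} {φ : ℝ → ℝ} (hφ : Continuous φ) {M : ℝ}
    (hM : ∀ r ρ, 0 < r → ∫ t in Ioc r ρ, t ^ (n - 1) * φ t ≤ M) (r : ℝ) {ε : ℝ} (hε : 0 < ε) :
    ∃ ρ, r ≤ ρ ∧ φ ρ ≤ ε := by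
  by_contra! hbig
  set r₁ := max r 1
  set R := r₁ + |M| / ε + 1
  have hr₁R : r₁ ≤ R := by have := div_nonneg (abs_nonneg M) hε.le; linarith
  have hmass : ε * (R - r₁) ≤ M :=
    calc ε * (R - r₁) = ∫ _ in Ioc r₁ R, ε := by
          rw [setIntegral_const, Real.volume_real_Ioc_of_le hr₁R, smul_eq_mul, mul_comm]
      _ ≤ ∫ t in Ioc r₁ R, t ^ (n - 1) * φ t := by
          refine setIntegral_mono_on (continuous_const.integrableOn_Ioc)
            ((continuous_pow _).mul hφ).integrableOn_Ioc measurableSet_Ioc fun t ht => ?_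
          have ht₁ : 1 ≤ t := (le_max_right r 1).trans ht.1.le
          have hφt := hbig t ((le_max_left r 1).trans ht.1.le)
          exact hφt.le.trans (le_mul_of_one_le_left (hε.le.trans hφt.le) (one_le_pow₀ ht₁))
      _ ≤ M := hM r₁ R (one_pos.trans_le (le_max_right r 1))
  have : ε * (R - r₁) = |M| + ε := by
    rw [show R - r₁ = |M| / ε + 1 by ring, mul_add, mul_div_cancel₀ _ hε.ne', mul_one]
  linarith [le_abs_self M]

theorem rpow_natCast_sub_eq_rpow_mul_pow {t : ℝ} (ht : 0 < t) {n : ℕ} (hn : 1 ≤ n) (x : ℝ) :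
    t ^ ((n : ℝ) - x) = t ^ (1 - x) * t ^ (n - 1) := by
  rw [← Real.rpow_natCast, ← Real.rpow_add ht]
  congr 1
  push_cast [hn]
  ring

theorem rpow_mul_setIntegral_inv_pow_le {n : ℕ} {s : ℝ} (hn : 1 ≤ n) (hs1 : s < 1)
    (hsn : 2 * s ≤ n) {r ρ : ℝ} (hr : 0 < r) (hrρ : r ≤ ρ) :
    r ^ ((n : ℝ) - 2 * s) * ∫ t in Ioc r ρ, (t ^ (n - 1))⁻¹ ≤ ρ ^ (2 - 2 * s) / (2 - 2 * s) := by
  have hinv : ContinuousOn (fun t : ℝ => (t ^ (n - 1))⁻¹) (Icc r ρ) :=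
    (continuous_pow _).continuousOn.inv₀ fun t ht => (pow_pos (hr.trans_le ht.1) _).ne'
  have hpow : ∀ a b : ℝ, a ≤ b → IntegrableOn (fun t : ℝ => t ^ (1 - 2 * s)) (Ioc a b) :=
    fun a b hab => (intervalIntegrable_iff_integrableOn_Ioc_of_le hab).1
      (intervalIntegral.intervalIntegrable_rpow' (by linarith))
  calc _ = ∫ t in Ioc r ρ, r ^ ((n : ℝ) - 2 * s) * (t ^ (n - 1))⁻¹ :=
        (integral_const_mul _ _).symm
    _ ≤ ∫ t in Ioc r ρ, t ^ (1 - 2 * s) := by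
        refine setIntegral_mono_on
          ((continuousOn_const.mul hinv).integrableOn_Icc.mono_set Ioc_subset_Icc_self)
          (hpow r ρ hrρ) measurableSet_Ioc fun t ht => ?_
        have ht0 := hr.trans ht.1
        rw [← div_eq_mul_inv, div_le_iff₀ (pow_pos ht0 _),
          ← rpow_natCast_sub_eq_rpow_mul_pow ht0 hn]
        exact Real.rpow_le_rpow hr.le ht.1.le (by linarith)
    _ ≤ ∫ t in Ioc 0 ρ, t ^ (1 - 2 * s) :=
        setIntegral_mono_set (hpow 0 ρ (hr.le.trans hrρ))
          ((ae_restrict_mem measurableSet_Ioc).mono fun t ht => Real.rpow_nonneg ht.1.le _)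
          (Ioc_subset_Ioc_left hr.le).eventuallyLE
    _ = ρ ^ (2 - 2 * s) / (2 - 2 * s) := by
        rw [← intervalIntegral.integral_of_le (hr.le.trans hrρ),
          integral_rpow (Or.inl (by linarith)), Real.zero_rpow (by linarith), sub_zero]
        ring_nf

section Profile

variable {g : ℝ → ℂ} {n : ℕ} {m d s : ℝ}

theorem pow_mul_norm_sq_le_add (hg : ContDiff ℝ 1 g)
    (hm : ∀ r ρ, 0 < r → ∫ t in Ioc r ρ, t ^ (n - 1) * ‖g t‖ ^ 2 ≤ m ^ 2)
    (hd : ∀ r ρ, 0 < r → ∫ t in Ioc r ρ, t ^ (n - 1) * ‖deriv g t‖ ^ 2 ≤ d ^ 2)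
    (hm0 : 0 ≤ m) (hd0 : 0 ≤ d) {r ρ : ℝ} (hr : 0 < r) (hrρ : r ≤ ρ) :
    r ^ (n - 1) * ‖g r‖ ^ 2 ≤ r ^ (n - 1) * ‖g ρ‖ ^ 2 + 2 * (m * d) := by
  have hgc : Continuous fun t => ‖g t‖ := hg.continuous.norm
  have hg'c : Continuous fun t => ‖deriv g t‖ := (hg.continuous_deriv le_rfl).norm
  have hderiv : ∀ t, ‖deriv (fun t => ‖g t‖ ^ 2) t‖ ≤ 2 * (‖g t‖ * ‖deriv g t‖) := fun t => by
    rw [((hg.differentiable one_ne_zero t).hasDerivAt.norm_sq).deriv, norm_mul,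
      Real.norm_two, Real.norm_eq_abs]
    gcongr
    exact abs_real_inner_le_norm _ _
  have hftc := norm_le_norm_add_setIntegral_norm_deriv (hg.norm_sq ℝ) hrρ
  simp only [norm_pow, norm_norm] at hftc
  have hCS : ∫ t in Ioc r ρ, t ^ (n - 1) * (‖g t‖ * ‖deriv g t‖) ≤ m * d :=
    calc _ ≤ √(∫ t in Ioc r ρ, t ^ (n - 1) * ‖g t‖ ^ 2) *
            √(∫ t in Ioc r ρ, t ^ (n - 1) * ‖deriv g t‖ ^ 2) :=
          setIntegral_mul_mul_le_sqrt_mul_sqrt (continuous_pow _).continuousOn hgc.continuousOn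
            hg'c.continuousOn (fun t ht => pow_nonneg (hr.trans ht.1).le _)
            (fun t _ => norm_nonneg _) (fun t _ => norm_nonneg _)
      _ ≤ √(m ^ 2) * √(d ^ 2) := by gcongr <;> [exact hm r ρ hr; exact hd r ρ hr]
      _ = m * d := by rw [Real.sqrt_sq hm0, Real.sqrt_sq hd0]
  have hweight : r ^ (n - 1) * ∫ t in Ioc r ρ, ‖deriv (fun t => ‖g t‖ ^ 2) t‖ ≤ 2 * (m * d) :=
    calc _ = ∫ t in Ioc r ρ, r ^ (n - 1) * ‖deriv (fun t => ‖g t‖ ^ 2) t‖ :=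
          (integral_const_mul _ _).symm
      _ ≤ ∫ t in Ioc r ρ, 2 * (t ^ (n - 1) * (‖g t‖ * ‖deriv g t‖)) := by
          refine setIntegral_mono_on ?_ ?_ measurableSet_Ioc fun t ht => ?_
          · exact (continuous_const.mul
              ((hg.norm_sq ℝ).continuous_deriv le_rfl).norm).integrableOn_Ioc
          · exact (continuous_const.mul ((continuous_pow _).mul (hgc.mul hg'c))).integrableOn_Ioc
          · calc r ^ (n - 1) * ‖deriv (fun t => ‖g t‖ ^ 2) t‖
                ≤ t ^ (n - 1) * (2 * (‖g t‖ * ‖deriv g t‖)) :=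
                  mul_le_mul (pow_le_pow_left₀ hr.le ht.1.le _) (hderiv t)
                    (norm_nonneg _) (pow_nonneg (hr.trans ht.1).le _)
              _ = _ := by ring
      _ ≤ 2 * (m * d) := by rw [integral_const_mul]; gcongr
  nlinarith [pow_nonneg hr.le (n - 1)]

theorem pow_mul_norm_sq_le (hg : ContDiff ℝ 1 g)
    (hm : ∀ r ρ, 0 < r → ∫ t in Ioc r ρ, t ^ (n - 1) * ‖g t‖ ^ 2 ≤ m ^ 2)
    (hd : ∀ r ρ, 0 < r → ∫ t in Ioc r ρ, t ^ (n - 1) * ‖deriv g t‖ ^ 2 ≤ d ^ 2)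
    (hm0 : 0 ≤ m) (hd0 : 0 ≤ d) {r : ℝ} (hr : 0 < r) :
    r ^ (n - 1) * ‖g r‖ ^ 2 ≤ 2 * (m * d) := by
  refine le_of_forall_pos_le_add fun ε hε => ?_
  obtain ⟨ρ, hrρ, hρ⟩ := exists_le_of_setIntegral_pow_mul_le (φ := fun t => ‖g t‖ ^ 2)
    (hg.continuous.norm.pow 2) hm r (div_pos hε (pow_pos hr (n - 1)))
  calc r ^ (n - 1) * ‖g r‖ ^ 2 ≤ r ^ (n - 1) * ‖g ρ‖ ^ 2 + 2 * (m * d) :=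
        pow_mul_norm_sq_le_add hg hm hd hm0 hd0 hr hrρ
    _ ≤ r ^ (n - 1) * (ε / r ^ (n - 1)) + 2 * (m * d) := by gcongr
    _ = 2 * (m * d) + ε := by field_simp; ring

theorem rpow_mul_norm_le_of_le (hg : ContDiff ℝ 1 g)
    (hm : ∀ r ρ, 0 < r → ∫ t in Ioc r ρ, t ^ (n - 1) * ‖g t‖ ^ 2 ≤ m ^ 2)
    (hd : ∀ r ρ, 0 < r → ∫ t in Ioc r ρ, t ^ (n - 1) * ‖deriv g t‖ ^ 2 ≤ d ^ 2)
    (hm0 : 0 ≤ m) (hd0 : 0 ≤ d) (hn : 1 ≤ n) (hs : 1 / 2 ≤ s) {ρ r : ℝ} (hρ : 0 < ρ)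
    (hρr : ρ ≤ r) :
    r ^ (((n : ℝ) - 2 * s) / 2) * ‖g r‖ ≤ √2 * √(ρ ^ (1 - 2 * s) * (m * d)) := by
  have hr := hρ.trans_le hρr
  rw [← Real.sqrt_mul zero_le_two,
    Real.le_sqrt (by positivity) (by have := mul_nonneg hm0 hd0; positivity)]
  calc (r ^ (((n : ℝ) - 2 * s) / 2) * ‖g r‖) ^ 2
      = r ^ (1 - 2 * s) * (r ^ (n - 1) * ‖g r‖ ^ 2) := by
        rw [mul_pow, ← Real.rpow_mul_natCast hr.le, ← mul_assoc,
          ← rpow_natCast_sub_eq_rpow_mul_pow hr hn]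
        norm_num
    _ ≤ ρ ^ (1 - 2 * s) * (2 * (m * d)) :=
        mul_le_mul (Real.rpow_le_rpow_of_nonpos hρ hρr (by linarith))
          (pow_mul_norm_sq_le hg hm hd hm0 hd0 hr) (by positivity) (by positivity)
    _ = 2 * (ρ ^ (1 - 2 * s) * (m * d)) := by ring

theorem setIntegral_norm_deriv_le_sqrt_mul (hg : ContDiff ℝ 1 g)
    (hd : ∀ r ρ, 0 < r → ∫ t in Ioc r ρ, t ^ (n - 1) * ‖deriv g t‖ ^ 2 ≤ d ^ 2)
    (hd0 : 0 ≤ d) {r ρ : ℝ} (hr : 0 < r) :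
    ∫ t in Ioc r ρ, ‖deriv g t‖ ≤ √(∫ t in Ioc r ρ, (t ^ (n - 1))⁻¹) * d := by
  have hinv : ContinuousOn (fun t : ℝ => (t ^ (n - 1))⁻¹) (Icc r ρ) :=
    (continuous_pow _).continuousOn.inv₀ fun t ht => (pow_pos (hr.trans_le ht.1) _).ne'
  calc _ = ∫ t in Ioc r ρ, t ^ (n - 1) * ((t ^ (n - 1))⁻¹ * ‖deriv g t‖) :=
        setIntegral_congr_fun measurableSet_Ioc fun t ht => by
          rw [mul_inv_cancel_left₀ (pow_pos (hr.trans ht.1) _).ne']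
    _ ≤ √(∫ t in Ioc r ρ, t ^ (n - 1) * ((t ^ (n - 1))⁻¹) ^ 2) *
          √(∫ t in Ioc r ρ, t ^ (n - 1) * ‖deriv g t‖ ^ 2) :=
        setIntegral_mul_mul_le_sqrt_mul_sqrt (continuous_pow _).continuousOn hinv
          (hg.continuous_deriv le_rfl).norm.continuousOn
          (fun t ht => pow_nonneg (hr.trans ht.1).le _)
          (fun t ht => inv_nonneg.2 (pow_nonneg (hr.trans ht.1).le _))
          (fun t _ => norm_nonneg _)
    _ ≤ √(∫ t in Ioc r ρ, (t ^ (n - 1))⁻¹) * √(d ^ 2) := by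
        rw [setIntegral_congr_fun measurableSet_Ioc fun t ht => by
          rw [sq, mul_inv_cancel_left₀ (pow_pos (hr.trans ht.1) _).ne']]
        gcongr
        exact hd r ρ hr
    _ = _ := by rw [Real.sqrt_sq hd0]

theorem rpow_mul_norm_le_add (hg : ContDiff ℝ 1 g)
    (hd : ∀ r ρ, 0 < r → ∫ t in Ioc r ρ, t ^ (n - 1) * ‖deriv g t‖ ^ 2 ≤ d ^ 2)
    (hd0 : 0 ≤ d) (hn : 1 ≤ n) (hs1 : s < 1) (hsn : 2 * s ≤ n) {r ρ : ℝ} (hr : 0 < r)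
    (hrρ : r ≤ ρ) :
    r ^ (((n : ℝ) - 2 * s) / 2) * ‖g r‖ ≤
      ρ ^ (((n : ℝ) - 2 * s) / 2) * ‖g ρ‖ + ρ ^ (1 - s) * d / √(2 - 2 * s) := by
  set I := ∫ t in Ioc r ρ, (t ^ (n - 1))⁻¹
  have hweight : r ^ (((n : ℝ) - 2 * s) / 2) * √I ≤ ρ ^ (1 - s) / √(2 - 2 * s) :=
    calc _ = √(r ^ ((n : ℝ) - 2 * s) * I) := by
          rw [Real.sqrt_mul (by positivity), Real.sqrt_eq_rpow (r ^ _), ← Real.rpow_mul hr.le]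
          ring_nf
      _ ≤ √(ρ ^ (2 - 2 * s) / (2 - 2 * s)) :=
          Real.sqrt_le_sqrt (rpow_mul_setIntegral_inv_pow_le hn hs1 hsn hr hrρ)
      _ = ρ ^ (1 - s) / √(2 - 2 * s) := by
          rw [Real.sqrt_div' _ (by linarith), Real.sqrt_eq_rpow,
            ← Real.rpow_mul (hr.trans_le hrρ).le]
          ring_nf
  calc r ^ (((n : ℝ) - 2 * s) / 2) * ‖g r‖
      ≤ r ^ (((n : ℝ) - 2 * s) / 2) * (‖g ρ‖ + ∫ t in Ioc r ρ, ‖deriv g t‖) := by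
        gcongr
        exact norm_le_norm_add_setIntegral_norm_deriv hg hrρ
    _ ≤ ρ ^ (((n : ℝ) - 2 * s) / 2) * ‖g ρ‖ + r ^ (((n : ℝ) - 2 * s) / 2) * √I * d := by
        rw [mul_add, mul_assoc]
        gcongr
        exact setIntegral_norm_deriv_le_sqrt_mul hg hd hd0 hr
    _ ≤ ρ ^ (((n : ℝ) - 2 * s) / 2) * ‖g ρ‖ + ρ ^ (1 - s) / √(2 - 2 * s) * d := by gcongr
    _ = _ := by ring

theorem rpow_mul_norm_le (hg : ContDiff ℝ 1 g)
    (hm : ∀ r ρ, 0 < r → ∫ t in Ioc r ρ, t ^ (n - 1) * ‖g t‖ ^ 2 ≤ m ^ 2)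
    (hd : ∀ r ρ, 0 < r → ∫ t in Ioc r ρ, t ^ (n - 1) * ‖deriv g t‖ ^ 2 ≤ d ^ 2)
    (hm0 : 0 ≤ m) (hd0 : 0 ≤ d) (hs : 1 / 2 ≤ s) (hs1 : s < 1) (hsn : 2 * s < n) {r : ℝ}
    (hr : 0 ≤ r) :
    r ^ (((n : ℝ) - 2 * s) / 2) * ‖g r‖ ≤ (√2 + 1 / √(2 - 2 * s)) * (m ^ (1 - s) * d ^ s) := by
  have hn : 1 ≤ n := by exact_mod_cast (show (1 : ℝ) ≤ n by linarith)
  have hbound : 0 ≤ (√2 + 1 / √(2 - 2 * s)) * (m ^ (1 - s) * d ^ s) := by positivity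
  obtain rfl | hr := hr.eq_or_lt
  · rw [Real.zero_rpow (by linarith), zero_mul]
    exact hbound
  obtain hmd | hmd := (mul_nonneg hm0 hd0).eq_or_lt
  · have hstrauss := pow_mul_norm_sq_le hg hm hd hm0 hd0 hr
    rw [← hmd, mul_zero] at hstrauss
    have hsq : ‖g r‖ ^ 2 ≤ 0 := le_of_mul_le_mul_left (by simpa using hstrauss) (pow_pos hr _)
    have : ‖g r‖ = 0 := (pow_eq_zero_iff two_ne_zero).1 (le_antisymm hsq (sq_nonneg _))
    rw [this, mul_zero]
    exact hbound
  have hdpos : 0 < d := lt_of_le_of_ne hd0 fun h => by simp [← h] at hmd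
  -- the scale `ρ = m / d` balances the two estimates
  set ρ := m / d
  have hρ : 0 < ρ := div_pos (pos_of_mul_pos_left hmd hd0) hdpos
  have hmρ : m = ρ * d := (div_mul_cancel₀ m hdpos.ne').symm
  have hinterp : m ^ (1 - s) * d ^ s = ρ ^ (1 - s) * d := by
    rw [hmρ, Real.mul_rpow hρ.le hd0, mul_assoc, ← Real.rpow_add hdpos]
    norm_num
  have hlarge : ∀ r', ρ ≤ r' →
      r' ^ (((n : ℝ) - 2 * s) / 2) * ‖g r'‖ ≤ √2 * (ρ ^ (1 - s) * d) := by
    intro r' hρr'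
    have hsq : ρ ^ (1 - 2 * s) * (m * d) = (ρ ^ (1 - s) * d) ^ 2 := by
      rw [hmρ, mul_pow, ← Real.rpow_mul_natCast hρ.le,
        show (1 - s) * ((2 : ℕ) : ℝ) = (1 - 2 * s) + 1 by push_cast; ring,
        Real.rpow_add_one hρ.ne']
      ring
    simpa only [hsq, Real.sqrt_sq (by positivity : 0 ≤ ρ ^ (1 - s) * d)] using
      rpow_mul_norm_le_of_le hg hm hd hm0 hd0 hn hs hρ hρr'
  rw [hinterp]
  obtain hρr | hrρ := le_total ρ r
  · calc _ ≤ √2 * (ρ ^ (1 - s) * d) := hlarge r hρr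
      _ ≤ _ := by gcongr; exact le_add_of_nonneg_right (by positivity)
  · calc _ ≤ ρ ^ (((n : ℝ) - 2 * s) / 2) * ‖g ρ‖ + ρ ^ (1 - s) * d / √(2 - 2 * s) :=
          rpow_mul_norm_le_add hg hd hd0 hn hs1 hsn.le hr hrρ
      _ ≤ √2 * (ρ ^ (1 - s) * d) + ρ ^ (1 - s) * d / √(2 - 2 * s) := by
          linarith [hlarge ρ le_rfl]
      _ = _ := by ring

end Profile

theorem mul_setIntegral_Ioc_pow_mul_le_integral {E : Type*} [NormedAddCommGroup E]
    [NormedSpace ℝ E] [Nontrivial E] [FiniteDimensional ℝ E] [MeasurableSpace E] [BorelSpace E]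
    (μ : Measure E) [μ.IsAddHaarMeasure] {φ : ℝ → ℝ} (hφ : Continuous φ) (hφ0 : ∀ t, 0 ≤ φ t)
    {v : E → ℝ} (hv : Integrable v μ) (hφv : ∀ x, φ ‖x‖ ≤ v x) {r : ℝ} (hr : 0 ≤ r) (ρ : ℝ) :
    Module.finrank ℝ E * μ.real (Metric.ball 0 1) *
      ∫ t in Ioc r ρ, t ^ (Module.finrank ℝ E - 1) * φ t ≤ ∫ x, v x ∂μ := by
  have hint : Integrable (fun x => φ ‖x‖) μ :=
    hv.mono' (hφ.comp continuous_norm).aestronglyMeasurable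
      (ae_of_all _ fun x => (Real.norm_of_nonneg (hφ0 _)).trans_le (hφv x))
  calc _ ≤ Module.finrank ℝ E * μ.real (Metric.ball 0 1) *
        ∫ t in Ioi 0, t ^ (Module.finrank ℝ E - 1) * φ t := by
        refine mul_le_mul_of_nonneg_left ?_ (by positivity)
        exact setIntegral_mono_set ((integrable_fun_norm_addHaar μ).1 hint)
          ((ae_restrict_mem measurableSet_Ioi).mono fun t ht =>
            mul_nonneg (pow_nonneg (le_of_lt ht) _) (hφ0 t))
          (Ioc_subset_Ioi_self.trans (Ioi_subset_Ioi hr)).eventuallyLE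
    _ = ∫ x, φ ‖x‖ ∂μ := by
        rw [integral_fun_norm_addHaar μ φ, nsmul_eq_mul, smul_eq_mul, mul_assoc]
        rfl
    _ ≤ ∫ x, v x ∂μ := integral_mono hint hv hφv

section Radial

variable {E F : Type*} [NormedAddCommGroup E] [NormedSpace ℝ E] {u : E → F}

theorem radial_comp_smul_eq (hu : ∀ x y, ‖x‖ = ‖y‖ → u x = u y) {e w : E} (he : ‖e‖ = 1)
    (hw : ‖w‖ = 1) : (fun t : ℝ => u (t • e)) = fun t => u (t • w) :=
  funext fun t => hu _ _ (by rw [norm_smul, norm_smul, he, hw])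

theorem radial_eq_comp_smul (hu : ∀ x y, ‖x‖ = ‖y‖ → u x = u y) {e : E} (he : ‖e‖ = 1) (x : E) :
    u x = u (‖x‖ • e) :=
  hu _ _ (by rw [norm_smul, he, norm_norm, mul_one])

theorem norm_deriv_comp_smul_le [NormedAddCommGroup F] [NormedSpace ℝ F]
    (hu : ∀ x y, ‖x‖ = ‖y‖ → u x = u y) (hdiff : Differentiable ℝ u) {e : E} (he : ‖e‖ = 1)
    (x : E) : ‖deriv (fun t : ℝ => u (t • e)) ‖x‖‖ ≤ ‖fderiv ℝ u x‖ := by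
  obtain ⟨w, hw, hxw⟩ : ∃ w : E, ‖w‖ = 1 ∧ ‖x‖ • w = x := by
    rcases eq_or_ne x 0 with rfl | hx
    · exact ⟨e, he, by simp⟩
    · exact ⟨‖x‖⁻¹ • x, by simp [norm_smul, hx], by simp [smul_smul, hx]⟩
  have hray : HasDerivAt (fun t : ℝ => u (t • w)) (fderiv ℝ u x w) ‖x‖ := by
    have := (hdiff (‖x‖ • w)).hasFDerivAt.comp_hasDerivAt ‖x‖
      ((hasDerivAt_id ‖x‖).smul_const w)
    simpa only [hxw, one_smul, Function.comp_def, id] using this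
  rw [radial_comp_smul_eq hu he hw, hray.deriv]
  simpa only [hw, mul_one] using (fderiv ℝ u x).le_opNorm w

end Radial

theorem div_rpow_one_sub_mul_div_rpow {a b c : ℝ} (ha : 0 ≤ a) (hb : 0 ≤ b) (hc : 0 < c) (s : ℝ) :
    (a / c) ^ (1 - s) * (b / c) ^ s = a ^ (1 - s) * b ^ s / c := by
  rw [Real.div_rpow ha hc.le, Real.div_rpow hb hc.le, div_mul_div_comm, ← Real.rpow_add hc]
  norm_num

/-- Strauss-type decay estimate for radial `C¹` functions with finite `L²` norm and
finite `L²` norm of the gradient: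
`|x|^((N-2s)/2) |u(x)| ≤ C ‖u‖_{L²}^{1-s} ‖∇u‖_{L²}^{s}` for `1/2 ≤ s < 1`. -/
theorem stmt1 (N : ℕ) (hN : 2 ≤ N) (s : ℝ) (hs : 1 / 2 ≤ s) (hs' : s < 1) :
    ∃ C > 0, ∀ u : EuclideanSpace ℝ (Fin N) → ℂ,
      ContDiff ℝ 1 u →
      (∀ x y, ‖x‖ = ‖y‖ → u x = u y) →
      Integrable (fun x => ‖u x‖ ^ 2) →
      Integrable (fun x => ‖fderiv ℝ u x‖ ^ 2) →
      ∀ x, ‖x‖ ^ (((N : ℝ) - 2 * s) / 2) * ‖u x‖ ≤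
        C * ((∫ x, ‖u x‖ ^ 2) ^ ((1 : ℝ) / 2)) ^ (1 - s)
          * ((∫ x, ‖fderiv ℝ u x‖ ^ 2) ^ ((1 : ℝ) / 2)) ^ s := by
  have : Nontrivial (EuclideanSpace ℝ (Fin N)) :=
    Module.nontrivial_of_finrank_pos (R := ℝ) (by rw [finrank_euclideanSpace_fin]; omega)
  set c := (N : ℝ) * volume.real (Metric.ball (0 : EuclideanSpace ℝ (Fin N)) 1)
  have hc : 0 < c := mul_pos (by positivity)
    (ENNReal.toReal_pos (Metric.measure_ball_pos _ _ one_pos).ne' measure_ball_lt_top.ne)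
  refine ⟨(√2 + 1 / √(2 - 2 * s)) / √c, by positivity, fun u hu hrad hA hB x => ?_⟩
  obtain ⟨e, he⟩ := exists_norm_eq (EuclideanSpace ℝ (Fin N)) zero_le_one
  have hg : ContDiff ℝ 1 fun t : ℝ => u (t • e) := hu.comp (contDiff_id.smul contDiff_const)
  have hshell : ∀ {φ : ℝ → ℝ} {v : EuclideanSpace ℝ (Fin N) → ℝ}, Continuous φ →
      (∀ t, 0 ≤ φ t) → Integrable v → (∀ x, φ ‖x‖ ≤ v x) →
      ∀ r ρ, 0 < r → ∫ t in Ioc r ρ, t ^ (N - 1) * φ t ≤ √((∫ x, v x) / c) ^ 2 := by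
    intro φ v hφ hφ0 hv hφv r ρ hr
    rw [Real.sq_sqrt (div_nonneg (integral_nonneg fun x => (hφ0 _).trans (hφv x)) hc.le),
      le_div_iff₀' hc]
    simpa only [finrank_euclideanSpace_fin] using
      mul_setIntegral_Ioc_pow_mul_le_integral volume hφ hφ0 hv hφv hr.le ρ
  have key := rpow_mul_norm_le hg
    (hshell (hg.continuous.norm.pow 2) (fun t => sq_nonneg _) hA
      fun x => (radial_eq_comp_smul hrad he x).symm ▸ le_rfl)
    (hshell ((hg.continuous_deriv le_rfl).norm.pow 2) (fun t => sq_nonneg _) hB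
      fun x => pow_le_pow_left₀ (norm_nonneg _)
        (norm_deriv_comp_smul_le hrad (hu.differentiable one_ne_zero) he x) 2)
    (Real.sqrt_nonneg _) (Real.sqrt_nonneg _) hs hs'
    (by linarith [show (2 : ℝ) ≤ N by exact_mod_cast hN]) (norm_nonneg x)
  rw [← radial_eq_comp_smul hrad he x, Real.sqrt_div' _ hc.le, Real.sqrt_div' _ hc.le,
    div_rpow_one_sub_mul_div_rpow (Real.sqrt_nonneg _) (Real.sqrt_nonneg _)
      (Real.sqrt_pos.2 hc)] at key
  simp only [Real.sqrt_eq_rpow] at key ⊢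
  calc _ ≤ _ := key
    _ = _ := by ring
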